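/- Let p_{j_1}, ..., p_{j_k} be k pairwise distinct primes with k ≥ 2. Then A_k(p_{j_1}, ..., p_{j_k}) = F_{k−1}(p_{j_1}, ..., p_{j_{k−1}}) + (p_{j_k} − 1) · A_{k−1}(p_{j_1}, ..., p_{j_{k−1}}). -/
import Mathlib


/-- `Adet k p` is the determinant of the `k × k` integer matrix with `p 0, …, p (k-1)` on
the diagonal and ones elsewhere. -/
def Adet (k : ℕ) (p : Fin k → ℕ) : ℤ :=
  (Matrix.of fun i j : Fin k => if i = j then (p i : ℤ) else 1).det

/-- `Fdet k p` is `(-1)^k` times the determinant of the `(k+1) × (k+1)` integer matrix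
whose first row is all ones and whose row `i+1` (for `1 ≤ i ≤ k`) has `p (i-1)` in column
`i` and ones elsewhere. -/
def Fdet (k : ℕ) (p : Fin k → ℕ) : ℤ :=
  (-1 : ℤ) ^ k *
    (Matrix.of fun i j : Fin (k + 1) =>
      if h : i = 0 then (1 : ℤ)
      else if (j : ℕ) = ((i.pred h : Fin k) : ℕ) then (p (i.pred h) : ℤ)
      else 1).det

/-- For `k ≥ 2` pairwise distinct primes,
`A_k(p_{j_1}, …, p_{j_k}) = F_{k-1}(p_{j_1}, …, p_{j_{k-1}}) + (p_{j_k} - 1) · A_{k-1}(p_{j_1}, …, p_{j_{k-1}})`. -/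
theorem A_recurrence (k : ℕ) (hk : 2 ≤ k) (p : Fin k → ℕ)
    (hp : ∀ i, (p i).Prime) (hinj : Function.Injective p) :
    Adet k p =
      Fdet (k - 1) (fun i => p (Fin.castLE (Nat.sub_le k 1) i)) +
        ((p ⟨k - 1, by omega⟩ : ℤ) - 1) *
          Adet (k - 1) (fun i => p (Fin.castLE (Nat.sub_le k 1) i)) := by
  obtain ⟨n, rfl⟩ : ∃ n, k = n + 2 := ⟨k - 2, by omega⟩
  set p' : Fin (n+1) → ℕ := fun i => p (Fin.castLE (Nat.sub_le (n+2) 1) i) with hp'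
  set M : Matrix (Fin (n+2)) (Fin (n+2)) ℤ :=
    Matrix.of fun i j : Fin (n+2) => if i = j then (p i : ℤ) else 1 with hM
  set F : Matrix (Fin (n+2)) (Fin (n+2)) ℤ :=
    Matrix.of fun i j : Fin (n + 2) =>
      if h : i = 0 then (1 : ℤ)
      else if (j : ℕ) = ((i.pred h : Fin (n+1)) : ℕ) then (p' (i.pred h) : ℤ)
      else 1 with hF
  -- splitting the last row
  have hsplit : M = M.updateRow (Fin.last (n+1))
      ((fun _ => (1:ℤ)) + fun j => if j = Fin.last (n+1) then (p (Fin.last (n+1)) : ℤ) - 1 else 0) := by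
    ext i j
    rcases eq_or_ne i (Fin.last (n+1)) with rfl | hi
    · simp only [Matrix.updateRow_self, Pi.add_apply, hM, Matrix.of_apply]
      rcases eq_or_ne (Fin.last (n+1)) j with rfl | hj
      · simp
      · simp [hj, (by simpa [eq_comm] using hj : ¬ j = Fin.last (n+1))]
    · rw [Matrix.updateRow_ne hi]
  -- the all-ones-last-row matrix is a rotation of F
  have hT1 : Matrix.det (M.updateRow (Fin.last (n+1)) (fun _ => (1:ℤ)))
      = (-1:ℤ)^(n+1) * F.det := by
    have heq : M.updateRow (Fin.last (n+1)) (fun _ => (1:ℤ))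
        = F.submatrix (finRotate (n+2)) id := by
      ext i j
      rcases eq_or_ne i (Fin.last (n+1)) with rfl | hi
      · have h0 : finRotate (n+2) (Fin.last (n+1)) = 0 := by
          simp [finRotate_succ_apply]
        simp [h0, hF]
      · rw [Matrix.updateRow_ne hi]
        have hlt : (i : ℕ) < n + 1 := by
          rcases lt_or_eq_of_le (Nat.lt_succ_iff.mp i.2) with h | h
          · exact h
          · exact absurd (Fin.ext h) hi
        have hval : ((finRotate (n+2) i : Fin (n+2)) : ℕ) = (i : ℕ) + 1 := by
          rw [finRotate_succ_apply]
          exact Fin.val_add_one_of_lt (by simpa [Fin.lt_iff_val_lt_val] using hlt)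
        have hne0 : finRotate (n+2) i ≠ 0 := by
          intro h
          rw [h] at hval; simp at hval
        have hpredval : (((finRotate (n+2) i).pred hne0 : Fin (n+1)) : ℕ) = (i : ℕ) := by
          rw [Fin.coe_pred, hval]; omega
        simp only [Matrix.submatrix_apply, id, hF, Matrix.of_apply, dif_neg hne0, hpredval]
        have hpp : (p' ((finRotate (n+2) i).pred hne0) : ℤ) = (p i : ℤ) := by
          congr 1
          simp only [hp']
          congr 1
          exact Fin.ext (by rw [Fin.coe_castLE]; exact hpredval)
        rw [hpp]
        simp only [hM, Matrix.of_apply]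
        congr 1
        · simp only [eq_iff_iff]
          constructor
          · rintro rfl; rfl
          · intro h; exact (Fin.ext h.symm)
    rw [heq, Matrix.det_permute]
    congr 1
    rw [sign_finRotate]
    push_cast
    rfl
  -- the other part
  have hT2 : Matrix.det (M.updateRow (Fin.last (n+1))
        (fun j => if j = Fin.last (n+1) then (p (Fin.last (n+1)) : ℤ) - 1 else 0))
      = ((p (Fin.last (n+1)) : ℤ) - 1) *
        (Matrix.of fun i j : Fin (n+1) => if i = j then (p' i : ℤ) else 1).det := by
    have hv : (fun j => if j = Fin.last (n+1) then (p (Fin.last (n+1)) : ℤ) - 1 else 0)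
        = ((p (Fin.last (n+1)) : ℤ) - 1) • (fun j => if j = Fin.last (n+1) then (1:ℤ) else 0) := by
      funext j; by_cases h : j = Fin.last (n+1) <;> simp [h]
    rw [hv, Matrix.det_updateRow_smul]
    congr 1
    set N := M.updateRow (Fin.last (n+1)) (fun j => if j = Fin.last (n+1) then (1:ℤ) else 0) with hN
    rw [Matrix.det_succ_row N (Fin.last (n+1))]
    rw [Finset.sum_eq_single (Fin.last (n+1))]
    · have hentry : N (Fin.last (n+1)) (Fin.last (n+1)) = 1 := by simp [hN]
      rw [hentry, Fin.succAbove_last]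
      have hsub : N.submatrix Fin.castSucc Fin.castSucc
          = Matrix.of fun i j : Fin (n+1) => if i = j then (p' i : ℤ) else 1 := by
        ext a b
        have ha : Fin.castSucc a ≠ Fin.last (n+1) := (Fin.castSucc_lt_last a).ne
        simp only [Matrix.submatrix_apply, hN, Matrix.updateRow_ne ha, hM, Matrix.of_apply]
        have : p (Fin.castSucc a) = p' a := by
          simp only [hp']; congr 1
        rcases eq_or_ne a b with rfl | hab
        · simp [this]
        · simp [hab, Fin.castSucc_inj]
      rw [hsub]
      have : (-1 : ℤ) ^ ((Fin.last (n+1) : ℕ) + (Fin.last (n+1) : ℕ)) = 1 :=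
        Even.neg_one_pow ⟨(Fin.last (n+1) : ℕ), rfl⟩
      rw [this, one_mul, one_mul]
    · intro j _ hj
      have : N (Fin.last (n+1)) j = 0 := by simp [hN, hj]
      rw [this]; ring
    · intro h; exact absurd (Finset.mem_univ _) h
  -- assemble
  have hdet : M.det = Matrix.det (M.updateRow (Fin.last (n+1)) (fun _ => (1:ℤ)))
      + Matrix.det (M.updateRow (Fin.last (n+1))
          (fun j => if j = Fin.last (n+1) then (p (Fin.last (n+1)) : ℤ) - 1 else 0)) := by
    rw [← Matrix.det_updateRow_add]
    exact congrArg Matrix.det hsplit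
  have hlast : (⟨n + 2 - 1, by omega⟩ : Fin (n+2)) = Fin.last (n+1) := Fin.ext rfl
  show M.det = _
  rw [hdet, hT1, hT2, hlast]
  rfl
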